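/- Let p ≥ 5 and λ = 1/p, and consider the cubes of the construction above: for levels 0 ≤ k' < k, any cube γA_w (γ ∈ ℤⁿ, w ∈ W_k) either is at Euclidean distance at least λ^{k+1} from every cube γ'A_{w'} (γ' ∈ ℤⁿ, w' ∈ W_{k'}), or is contained in some cube γ'A_{w'} with its boundary at distance at least λ^{k+1} from the boundary of γ'A_{w'} (separation property). -/

import Mathlib

/-- The homothety `h_l` of ratio `1/p` mapping `[0,1]ⁿ` onto its `l`-th subcube
(letters `l ∈ L = {0,…,p-1}ⁿ`, 0-indexed), on Euclidean space. -/
noncomputable def subcubeHomothety (n p : ℕ) (l : Fin n → Fin p)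
    (x : EuclideanSpace ℝ (Fin n)) : EuclideanSpace ℝ (Fin n) :=
  WithLp.toLp 2 (fun i => (x i + (l i : ℝ)) / p)

/-- `h_w` for a word `w = l₁…l_k`: the composition `h_{l₁} ∘ … ∘ h_{l_k}`. -/
noncomputable def wordHomothety (n p : ℕ) (w : List (Fin n → Fin p)) :
    EuclideanSpace ℝ (Fin n) → EuclideanSpace ℝ (Fin n) :=
  w.foldr (fun l f => subcubeHomothety n p l ∘ f) id

/-- The cube `γ + A_w` for `γ ∈ ℤⁿ` and a word `w`. -/
noncomputable def cubeOf (n p : ℕ) (γ : Fin n → ℤ) (w : List (Fin n → Fin p))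
    (A : Set (EuclideanSpace ℝ (Fin n))) : Set (EuclideanSpace ℝ (Fin n)) :=
  (fun a => (WithLp.toLp 2 (fun i => (γ i : ℝ) + a i) : EuclideanSpace ℝ (Fin n))) ''
    (wordHomothety n p w '' A)

/-!
In each coordinate a level-`k` cube is the interval `m + [1/p, 1 - 1/p]` scaled by `λ^k`, and
its `λ^{k+1}`-neighbourhood still lies in a single grid interval `[c, c + 1] λ^{k'+1}` of level
`k' + 1 ≤ k`. Such a grid interval either lies inside the coordinate interval of a level-`k'`
cube (when `c mod p ∉ {0, p - 1}`) or meets those intervals at most in an endpoint. If every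
coordinate is of the first kind, the cube sits `λ^{k+1}`-deep inside a level-`k'` cube; otherwise
one coordinate alone keeps it `λ^{k+1}` away from every level-`k'` cube.
-/

open Set Metric

section Cubes

variable {n p : ℕ}

/-- The integer with base-`p` digits `w₁(i) … w_k(i)`, most significant first. -/
def wordIndex : List (Fin n → Fin p) → Fin n → ℤ
  | [] => fun _ => 0
  | l :: w => fun i => (l i : ℤ) * p ^ w.length + wordIndex w i

/-- `(m + [1/p, 1 - 1/p]) λ^k`, written on the grid of mesh `λ^{k+1}`. -/
noncomputable def levelInterval (p k : ℕ) (m : ℤ) : Set ℝ :=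
  Icc ((p * m + 1) * (1 / p) ^ (k + 1)) ((p * m + p - 1) * (1 / p) ^ (k + 1))

noncomputable def levelCube (n p k : ℕ) (m : Fin n → ℤ) : Set (EuclideanSpace ℝ (Fin n)) :=
  {x | ∀ i, x i ∈ levelInterval p k (m i)}

lemma wordHomothety_apply (hp : 0 < p) (w : List (Fin n → Fin p))
    (x : EuclideanSpace ℝ (Fin n)) (i : Fin n) :
    wordHomothety n p w x i = (x i + wordIndex w i) / (p : ℝ) ^ w.length := by
  induction w generalizing x with
  | nil => simp [wordHomothety, wordIndex]
  | cons l w ih =>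
    change (wordHomothety n p w x i + (l i : ℝ)) / p = _
    rw [ih]
    simp only [wordIndex, List.length_cons]
    push_cast
    field_simp
    ring

lemma add_div_pow_mem_levelInterval_iff (hp : 0 < p) (k : ℕ) (m : ℤ) (s : ℝ) :
    (s + m) / (p : ℝ) ^ k ∈ levelInterval p k m ↔ s ∈ Icc (1 / (p : ℝ)) (1 - 1 / p) := by
  have hP : (0 : ℝ) < (p : ℝ) ^ k := by positivity
  have hlo : (p * m + 1) * (1 / (p : ℝ)) ^ (k + 1) = (1 / p + m) / (p : ℝ) ^ k := by
    rw [one_div_pow, pow_succ]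
    field_simp
    ring
  have hhi : (p * m + p - 1) * (1 / (p : ℝ)) ^ (k + 1) = (1 - 1 / p + m) / (p : ℝ) ^ k := by
    rw [one_div_pow, pow_succ]
    field_simp
    ring
  simp only [levelInterval, mem_Icc, hlo, hhi, div_le_div_iff_of_pos_right hP,
    add_le_add_iff_right]

lemma cubeOf_eq_levelCube (hp : 0 < p) (γ : Fin n → ℤ) (w : List (Fin n → Fin p)) :
    cubeOf n p γ w {x | ∀ i, x i ∈ Icc (1 / (p : ℝ)) (1 - 1 / p)} =
      levelCube n p w.length (fun i => γ i * p ^ w.length + wordIndex w i) := by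
  have hcoord : ∀ (a : EuclideanSpace ℝ (Fin n)) i, (γ i : ℝ) + wordHomothety n p w a i =
      (a i + ((γ i * p ^ w.length + wordIndex w i : ℤ) : ℝ)) / (p : ℝ) ^ w.length := by
    intro a i
    rw [wordHomothety_apply hp]
    push_cast
    field_simp
    ring
  ext x
  constructor
  · rintro ⟨_, ⟨a, ha, rfl⟩, rfl⟩ i
    change (γ i : ℝ) + wordHomothety n p w a i ∈ _
    rw [hcoord]
    exact (add_div_pow_mem_levelInterval_iff hp _ _ _).2 (ha i)
  · intro hx
    set m := fun i => γ i * (p : ℤ) ^ w.length + wordIndex w i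
    set a : EuclideanSpace ℝ (Fin n) :=
      WithLp.toLp 2 (fun i => x i * (p : ℝ) ^ w.length - m i)
    have hxa : ∀ i, x i = (a i + m i) / (p : ℝ) ^ w.length := fun i => by
      change x i = (x i * (p : ℝ) ^ w.length - m i + m i) / _
      field_simp
      ring
    refine ⟨_, ⟨a, fun i => ?_, rfl⟩, ?_⟩
    · exact (add_div_pow_mem_levelInterval_iff hp _ _ _).1 (hxa i ▸ hx i)
    · ext i
      exact (hcoord a i).trans (hxa i).symm

lemma exists_wordIndex_eq (hp : 0 < p) (k : ℕ) (m : Fin n → ℤ) :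
    ∃ (γ : Fin n → ℤ) (w : List (Fin n → Fin p)), w.length = k ∧
      ∀ i, γ i * p ^ k + wordIndex w i = m i := by
  induction k with
  | zero => exact ⟨m, [], rfl, fun i => by simp [wordIndex]⟩
  | succ k ih =>
    obtain ⟨γ, w, hlen, hγw⟩ := ih
    have hp' : (0 : ℤ) < p := by exact_mod_cast hp
    have hdigit : ∀ i, 0 ≤ γ i % p ∧ γ i % p < p := fun i =>
      ⟨Int.emod_nonneg _ hp'.ne', Int.emod_lt_of_pos _ hp'⟩
    let l : Fin n → Fin p := fun i => ⟨(γ i % p).toNat, by have := hdigit i; omega⟩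
    refine ⟨fun i => γ i / p, l :: w, by simp [hlen], fun i => ?_⟩
    have hl : ((l i : ℕ) : ℤ) = γ i % p := Int.toNat_of_nonneg (hdigit i).1
    simp only [wordIndex, hl, hlen, ← hγw i]
    linear_combination (p : ℤ) ^ k * Int.mul_ediv_add_emod (γ i) p

lemma exists_cubeOf_eq_levelCube (hp : 0 < p) (k : ℕ) (m : Fin n → ℤ) :
    ∃ (γ : Fin n → ℤ) (w : List (Fin n → Fin p)), w.length = k ∧
      cubeOf n p γ w {x | ∀ i, x i ∈ Icc (1 / (p : ℝ)) (1 - 1 / p)} = levelCube n p k m := by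
  obtain ⟨γ, w, rfl, hγw⟩ := exists_wordIndex_eq hp k m
  exact ⟨γ, w, rfl, by rw [cubeOf_eq_levelCube hp]; simp only [hγw]⟩

end Cubes

section Blocks

variable {p : ℕ}

lemma exists_levelInterval_subset_block (hp : 0 < p) {k' k : ℕ} (hk : k' < k) (m : ℤ) :
    ∃ c : ℤ, levelInterval p k m ⊆ Icc (c * (1 / p) ^ (k' + 1) + (1 / p) ^ (k + 1))
      ((c + 1) * (1 / p) ^ (k' + 1) - (1 / p) ^ (k + 1)) := by
  set Q : ℤ := p ^ (k - k' - 1) with hQ_def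
  have hQ : 0 < Q := by positivity
  have hscale : (1 / (p : ℝ)) ^ (k' + 1) = ((p * Q : ℤ) : ℝ) * (1 / p) ^ (k + 1) := by
    have hk1 : k + 1 = k' + 1 + (k - k' - 1) + 1 := by omega
    push_cast [hQ_def]
    rw [hk1]
    simp only [one_div, inv_pow, pow_add, pow_one]
    field_simp
  -- drop the last `k - k' - 1` base-`p` digits of `m`
  refine ⟨m / Q, ?_⟩
  have hm := Int.mul_ediv_add_emod m Q
  have hr0 := Int.emod_nonneg m hQ.ne'
  have hrQ := Int.emod_lt_of_pos m hQ
  have hlo : m / Q * (p * Q) + 1 ≤ p * m + 1 := by nlinarith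
  have hhi : p * m + p - 1 ≤ (m / Q + 1) * (p * Q) - 1 := by nlinarith
  rintro x ⟨hx1, hx2⟩
  rw [hscale]
  constructor
  · calc ((m / Q : ℤ) : ℝ) * (((p * Q : ℤ) : ℝ) * (1 / p) ^ (k + 1)) + (1 / p) ^ (k + 1)
        = ((m / Q * (p * Q) + 1 : ℤ) : ℝ) * (1 / p) ^ (k + 1) := by push_cast; ring
      _ ≤ ((p * m + 1 : ℤ) : ℝ) * (1 / p) ^ (k + 1) := by gcongr
      _ ≤ x := by push_cast; exact hx1
  · calc x ≤ ((p * m + p - 1 : ℤ) : ℝ) * (1 / p) ^ (k + 1) := by push_cast; exact hx2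
      _ ≤ (((m / Q + 1) * (p * Q) - 1 : ℤ) : ℝ) * (1 / p) ^ (k + 1) := by gcongr
      _ = ((m / Q : ℤ) + 1) * (((p * Q : ℤ) : ℝ) * (1 / p) ^ (k + 1)) - (1 / p) ^ (k + 1) := by
        push_cast; ring

variable {k' : ℕ} {t x : ℝ} {c M : ℤ}

lemma ball_subset_levelInterval (hc : p * M + 1 ≤ c ∧ c + 1 ≤ p * M + p - 1)
    (hx : x ∈ Icc (c * (1 / p) ^ (k' + 1) + t) ((c + 1) * (1 / p) ^ (k' + 1) - t)) :
    ball x t ⊆ levelInterval p k' M := by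
  have hu : 0 ≤ (1 / (p : ℝ)) ^ (k' + 1) := by positivity
  have h1 : ((p * M + 1 : ℤ) : ℝ) ≤ c := by exact_mod_cast hc.1
  have h2 : ((c + 1 : ℤ) : ℝ) ≤ ((p * M + p - 1 : ℤ) : ℝ) := by exact_mod_cast hc.2
  push_cast at h1 h2
  rw [Real.ball_eq_Ioo]
  rintro z ⟨hz1, hz2⟩
  constructor <;> nlinarith [hx.1, hx.2]

lemma le_dist_of_mem_levelInterval (hc : c ≤ p * M ∨ p * M + p - 1 ≤ c)
    (hx : x ∈ Icc (c * (1 / p) ^ (k' + 1) + t) ((c + 1) * (1 / p) ^ (k' + 1) - t)) {y : ℝ}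
    (hy : y ∈ levelInterval p k' M) : t ≤ dist x y := by
  have hu : 0 ≤ (1 / (p : ℝ)) ^ (k' + 1) := by positivity
  obtain ⟨hy1, hy2⟩ := hy
  obtain ⟨hx1, hx2⟩ := hx
  rw [Real.dist_eq]
  rcases hc with hc | hc
  · have h : ((c + 1 : ℤ) : ℝ) ≤ ((p * M + 1 : ℤ) : ℝ) := by exact_mod_cast (by omega)
    push_cast at h
    rw [abs_sub_comm]
    exact le_abs.2 (Or.inl (by nlinarith))
  · have h : ((p * M + p - 1 : ℤ) : ℝ) ≤ c := by exact_mod_cast hc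
    push_cast at h
    exact le_abs.2 (Or.inl (by nlinarith))

end Blocks

lemma ball_subset_levelCube {n p k : ℕ} {m : Fin n → ℤ} {x : EuclideanSpace ℝ (Fin n)} {r : ℝ}
    (h : ∀ i, ball (x i) r ⊆ levelInterval p k (m i)) : ball x r ⊆ levelCube n p k m :=
  fun z hz i => h i ((PiLp.dist_apply_le z x i).trans_lt hz)

lemma le_dist_of_ball_subset_of_mem_frontier {X : Type*} [PseudoMetricSpace X] {s : Set X}
    {x y : X} {r : ℝ} (hs : ball x r ⊆ s) (hy : y ∈ frontier s) : r ≤ dist x y := by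
  by_contra! h
  exact hy.2 (interior_maximal hs isOpen_ball (mem_ball'.2 h))

/-- Separation property: for levels `0 ≤ k' < k`, any cube `γ + A_w` of level `k` is
either at Euclidean distance at least `λ^{k+1}` (`λ = 1/p`) from every cube
`γ' + A_{w'}` of level `k'`, or it is contained in some such cube with every point of
it at distance at least `λ^{k+1}` from the boundary of that cube. -/
theorem separation_property (n p : ℕ) (hp : 5 ≤ p)
    (A : Set (EuclideanSpace ℝ (Fin n)))
    (hA : A = {x | ∀ i, x i ∈ Set.Icc (1 / (p : ℝ)) (1 - 1 / p)})
    (k k' : ℕ) (hk : k' < k)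
    (γ : Fin n → ℤ) (w : List (Fin n → Fin p)) (hw : w.length = k) :
    (∀ (γ' : Fin n → ℤ) (w' : List (Fin n → Fin p)), w'.length = k' →
        ∀ x ∈ cubeOf n p γ w A, ∀ y ∈ cubeOf n p γ' w' A,
          (1 / (p : ℝ)) ^ (k + 1) ≤ dist x y) ∨
      (∃ (γ' : Fin n → ℤ) (w' : List (Fin n → Fin p)), w'.length = k' ∧
        cubeOf n p γ w A ⊆ cubeOf n p γ' w' A ∧
        ∀ x ∈ cubeOf n p γ w A, ∀ y ∈ frontier (cubeOf n p γ' w' A),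
          (1 / (p : ℝ)) ^ (k + 1) ≤ dist x y) := by
  subst hA hw
  have hp0 : 0 < p := by omega
  set t : ℝ := (1 / (p : ℝ)) ^ (w.length + 1)
  have ht : 0 < t := by positivity
  rw [cubeOf_eq_levelCube hp0]
  choose c hc using fun i => exists_levelInterval_subset_block hp0 hk
    (γ i * p ^ w.length + wordIndex w i)
  by_cases hinside : ∀ i, ∃ M : ℤ, p * M + 1 ≤ c i ∧ c i + 1 ≤ p * M + p - 1
  · right
    choose M hM using hinside
    obtain ⟨γ', w', hlen, hM'⟩ := exists_cubeOf_eq_levelCube hp0 k' M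
    have hball : ∀ x ∈ levelCube n p w.length _, ball x t ⊆ cubeOf n p γ' w' _ := fun x hx =>
      hM' ▸ ball_subset_levelCube fun i => ball_subset_levelInterval (hM i) (hc i (hx i))
    exact ⟨γ', w', hlen, fun x hx => hball x hx (mem_ball_self ht),
      fun x hx y hy => le_dist_of_ball_subset_of_mem_frontier (hball x hx) hy⟩
  · left
    push Not at hinside
    obtain ⟨i, hi⟩ := hinside
    intro γ' w' hlen x hx y hy
    rw [cubeOf_eq_levelCube hp0, hlen] at hy
    have hgap : c i ≤ p * (γ' i * p ^ k' + wordIndex w' i) ∨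
        p * (γ' i * p ^ k' + wordIndex w' i) + p - 1 ≤ c i := by
      have := hi (γ' i * p ^ k' + wordIndex w' i)
      omega
    exact (le_dist_of_mem_levelInterval hgap (hc i (hx i)) (hy i)).trans
      (PiLp.dist_apply_le x y i)
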